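/- arXiv:0708.2544 — 5 statements merged into one kernel-verified Lean document; each statement's English description precedes it below -/
import Mathlib

section
/- Let H be the reflexive closure RC(TT_p^-) for p ≥ 3, i.e., the digraph on vertices 1,…,p with arcs {ij : 1 ≤ i < j ≤ p, (i,j) ≠ (1,p)} together with a loop at every vertex. Then the ordering 1,2,…,p of V(H) is a Min-Max ordering: for every non-trivial pair of arcs e=ik, f=js of H, both min{e,f} = (min{i,j}, min{k,s}) and max{e,f} = (max{i,j}, max{k,s}) are arcs of H. -/
/-- Let `H = RC(TT_p⁻)` for `p ≥ 3`: vertices `0, 1, …, p-1`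
(representing `1, …, p`), with an arc `i → j` iff `i ≤ j` and `(i,j)` is not the pair
`(first, last)`; this encodes all arcs `ij` with `i < j` except `1p`, together with a
loop at every vertex.  Then the natural ordering of `Fin p` is a Min-Max ordering:
for every non-trivial pair of arcs `e = (i,k)`, `f = (j,s)`, both the coordinatewise
minimum `(min i j, min k s)` and the coordinatewise maximum `(max i j, max k s)` are
arcs of `H`. -/
theorem stmt2 (p : ℕ) (hp : 3 ≤ p)
    (A : Fin p → Fin p → Prop)
    (hA : ∀ i j : Fin p, A i j ↔ (i ≤ j ∧ ¬(i.val = 0 ∧ j.val = p - 1))) :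
    ∀ i k j s : Fin p, A i k → A j s →
      -- the pair of arcs `(i,k)`, `(j,s)` is non-trivial:
      ¬(({((min i j, min k s) : Fin p × Fin p), (max i j, max k s)} : Set (Fin p × Fin p))
          = {(i, k), (j, s)}) →
      A (min i j) (min k s) ∧ A (max i j) (max k s) := by
  intro i k j s h1 h2 _
  rw [hA] at h1 h2 ⊢
  rw [hA]
  have hi := i.isLt
  have hk := k.isLt
  have hj := j.isLt
  have hs := s.isLt
  obtain ⟨h1a, h1b⟩ := h1
  obtain ⟨h2a, h2b⟩ := h2
  rw [Fin.le_def] at h1a h2a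
  have hmin : ∀ a b : Fin p, (min a b).val = min a.val b.val := fun a b => by
    rcases le_total a b with h | h
    · rw [min_eq_left h, min_eq_left (Fin.le_def.mp h)]
    · rw [min_eq_right h, min_eq_right (Fin.le_def.mp h)]
  have hmax : ∀ a b : Fin p, (max a b).val = max a.val b.val := fun a b => by
    rcases le_total a b with h | h
    · rw [max_eq_right h, max_eq_right (Fin.le_def.mp h)]
    · rw [max_eq_left h, max_eq_left (Fin.le_def.mp h)]
  refine ⟨⟨?_, ?_⟩, ?_, ?_⟩ <;>
    simp only [Fin.le_def, hmin, hmax] <;> omega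
end

section
/- Let H be a multipartite tournament (possibly with loops) with partite sets S1,…,Sk. If there exist u,v ∈ S1 and w,z ∈ S2 with u→w, w→v, z→u, z→v arcs of H and H has a loop at u and at w, then in BG(H) the vertices z1, u1, u2, w1, w2, v2 induce a cycle of length six. -/
/-- The bipartite representation `BG(H)` of a digraph with arc relation `A` on `V`. -/
def bipartiteRep {V : Type*} (A : V → V → Prop) : SimpleGraph (V ⊕ V) :=
  SimpleGraph.fromRel (fun a b => ∃ x y, a = Sum.inl x ∧ b = Sum.inr y ∧ A x y)

/-- The cycle of length six on `Fin 6` (`i` adjacent to `i ± 1 (mod 6)`). -/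
def cycle6 : SimpleGraph (Fin 6) := SimpleGraph.fromRel (fun i j => j = i + 1)

lemma bip_lr {V : Type*} (A : V → V → Prop) (x y : V) :
    (bipartiteRep A).Adj (Sum.inl x) (Sum.inr y) ↔ A x y := by
  simp [bipartiteRep, SimpleGraph.fromRel_adj]

lemma bip_ll {V : Type*} (A : V → V → Prop) (x y : V) :
    ¬ (bipartiteRep A).Adj (Sum.inl x) (Sum.inl y) := by
  simp [bipartiteRep, SimpleGraph.fromRel_adj]

lemma bip_rr {V : Type*} (A : V → V → Prop) (x y : V) :
    ¬ (bipartiteRep A).Adj (Sum.inr x) (Sum.inr y) := by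
  simp [bipartiteRep, SimpleGraph.fromRel_adj]

lemma bip_rl {V : Type*} (A : V → V → Prop) (x y : V) :
    (bipartiteRep A).Adj (Sum.inr y) (Sum.inl x) ↔ A x y := by
  rw [SimpleGraph.adj_comm]; exact bip_lr A x y

set_option maxHeartbeats 2000000 in
/-- Let `H` be a multipartite tournament (possibly with loops), with
partite sets given by the fibres of `part : V → ι`: distinct vertices in the same
partite set are nonadjacent, and between any two vertices in different partite sets
there is exactly one arc.  Suppose `u, v` lie in one partite set `S₁`, `w, z` lie in a
different partite set `S₂`, the arcs `u → w`, `w → v`, `z → u`, `z → v` are present,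
and `H` has a loop at `u` and at `w`.  Then in `BG(H)` the vertices
`z₁, u₁, u₂, w₁, w₂, v₂` induce a cycle of length six. -/
theorem stmt12 {V ι : Type*} (A : V → V → Prop) (part : V → ι)
    (hsame : ∀ x y, x ≠ y → part x = part y → ¬ A x y)
    (hdiff : ∀ x y, part x ≠ part y → (A x y ↔ ¬ A y x))
    (u v w z : V) (huv : u ≠ v) (hwz : w ≠ z)
    (hpuv : part u = part v) (hpwz : part w = part z) (hp12 : part u ≠ part w)
    (huw : A u w) (hwv : A w v) (hzu : A z u) (hzv : A z v)
    (hlu : A u u) (hlw : A w w) :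
    Nonempty
      (((bipartiteRep A).induce
          ({Sum.inl z, Sum.inl u, Sum.inr u, Sum.inl w, Sum.inr w, Sum.inr v} :
            Set (V ⊕ V))) ≃g cycle6) := by
  classical
  have huz : u ≠ z := fun h => hp12 (by rw [h, ← hpwz])
  have huw' : u ≠ w := fun h => hp12 (by rw [h])
  have hvw : v ≠ w := fun h => hp12 (by rw [hpuv, h])
  have hvz : v ≠ z := fun h => hp12 (by rw [hpuv, h, ← hpwz])
  have hzw : z ≠ w := Ne.symm hwz
  have hnzw : ¬ A z w := hsame z w hzw hpwz.symm
  have hnuv : ¬ A u v := hsame u v huv hpuv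
  have hnwu : ¬ A w u := fun h => (hdiff u w hp12).mp huw h
  set S : Set (V ⊕ V) :=
    {Sum.inl z, Sum.inl u, Sum.inr u, Sum.inl w, Sum.inr w, Sum.inr v} with hS
  let vals : Fin 6 → (V ⊕ V) := fun i =>
    match i with
    | 0 => Sum.inl z
    | 1 => Sum.inr u
    | 2 => Sum.inl u
    | 3 => Sum.inr w
    | 4 => Sum.inl w
    | 5 => Sum.inr v
  have hmem : ∀ i, vals i ∈ S := by
    intro i
    fin_cases i <;> simp [vals, hS]
  let f : Fin 6 → S := fun i => ⟨vals i, hmem i⟩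
  have hinj : Function.Injective f := by
    intro a b hab
    have h2 : vals a = vals b := congrArg Subtype.val hab
    fin_cases a <;> fin_cases b <;>
      simp_all [vals, huz, huw', hvw, hvz, hzw, huv, hwz,
        huz.symm, huw'.symm, hvw.symm, hvz.symm, huv.symm]
  have hsurj : Function.Surjective f := by
    rintro ⟨s, hs⟩
    simp only [hS, Set.mem_insert_iff, Set.mem_singleton_iff] at hs
    rcases hs with h | h | h | h | h | h
    · exact ⟨0, by simp [f, vals, h]⟩
    · exact ⟨2, by simp [f, vals, h]⟩
    · exact ⟨1, by simp [f, vals, h]⟩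
    · exact ⟨4, by simp [f, vals, h]⟩
    · exact ⟨3, by simp [f, vals, h]⟩
    · exact ⟨5, by simp [f, vals, h]⟩
  let e : Fin 6 ≃ S := Equiv.ofBijective f ⟨hinj, hsurj⟩
  have iso : cycle6 ≃g ((bipartiteRep A).induce S) := by
    refine ⟨e, ?_⟩
    intro a b
    show ((bipartiteRep A).induce S).Adj (f a) (f b) ↔ cycle6.Adj a b
    have hind : ((bipartiteRep A).induce S).Adj (f a) (f b) ↔
        (bipartiteRep A).Adj (vals a) (vals b) := Iff.rfl
    rw [hind]
    fin_cases a <;> fin_cases b <;>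
      simp_all [vals, cycle6, SimpleGraph.fromRel_adj, bip_lr, bip_rl, bip_ll, bip_rr]
  exact ⟨iso.symm⟩
end

section
/- Let H be a reflexive k-partite tournament with k ≥ 3 in which every partite set has exactly one vertex except one partite set Si = {u,v} of size two, and suppose H is acyclic and Si is dominated by all other partite sets. Then there exist vertices w, z outside Si with w→z such that the seven vertices w1, w2, u1, u2, v1, v2, z1 of BG(H) induce a bipartite net. -/
/-- The bipartite net: vertices `x₁,x₂,x₃,x₄` (as `Sum.inl 0,…,Sum.inl 3`) and
`y₁,y₂,y₃` (as `Sum.inr 0,…,Sum.inr 2`), with edge set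
`{x₁y₁, x₃y₁, x₄y₁, x₃y₂, x₄y₂, x₂y₂, x₄y₃}`. -/
def bipartiteNet : SimpleGraph (Fin 4 ⊕ Fin 3) :=
  SimpleGraph.fromRel (fun a b =>
    ∃ i j, a = Sum.inl i ∧ b = Sum.inr j ∧
      ((i, j) : Fin 4 × Fin 3) ∈
        ({(0, 0), (2, 0), (3, 0), (2, 1), (3, 1), (1, 1), (3, 2)} :
          Set (Fin 4 × Fin 3)))


section helpers
variable {V : Type*} (A : V → V → Prop)

lemma rep_adj (x y : V) : (bipartiteRep A).Adj (Sum.inl x) (Sum.inr y) ↔ A x y := by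
  simp [bipartiteRep]

lemma rep_nadj_ll (x y : V) : ¬ (bipartiteRep A).Adj (Sum.inl x) (Sum.inl y) := by
  simp [bipartiteRep]

lemma rep_nadj_rr (x y : V) : ¬ (bipartiteRep A).Adj (Sum.inr x) (Sum.inr y) := by
  simp [bipartiteRep]

lemma net_adj_iff (i : Fin 4) (j : Fin 3) :
    bipartiteNet.Adj (Sum.inl i) (Sum.inr j) ↔
      (i = 0 ∧ j = 0) ∨ (i = 2 ∧ j = 0) ∨ (i = 3 ∧ j = 0) ∨ (i = 2 ∧ j = 1) ∨
      (i = 3 ∧ j = 1) ∨ (i = 1 ∧ j = 1) ∨ (i = 3 ∧ j = 2) := by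
  simp [bipartiteNet, Set.mem_insert_iff, Set.mem_singleton_iff, Prod.ext_iff]

lemma net_nadj_ll (i j : Fin 4) : ¬ bipartiteNet.Adj (Sum.inl i) (Sum.inl j) := by
  simp [bipartiteNet]

lemma net_nadj_rr (i j : Fin 3) : ¬ bipartiteNet.Adj (Sum.inr i) (Sum.inr j) := by
  simp [bipartiteNet]

end helpers

def emap' {V : Type*} (u v z w : V) : Fin 4 ⊕ Fin 3 → V ⊕ V :=
  Sum.elim ![Sum.inl u, Sum.inl v, Sum.inl z, Sum.inl w] ![Sum.inr u, Sum.inr v, Sum.inr w]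

section emap
variable {V : Type*} (u v z w : V)

@[simp] lemma emap_l0 : emap' u v z w (Sum.inl 0) = Sum.inl u := rfl
@[simp] lemma emap_l1 : emap' u v z w (Sum.inl 1) = Sum.inl v := rfl
@[simp] lemma emap_l2 : emap' u v z w (Sum.inl 2) = Sum.inl z := rfl
@[simp] lemma emap_l3 : emap' u v z w (Sum.inl 3) = Sum.inl w := rfl
@[simp] lemma emap_r0 : emap' u v z w (Sum.inr 0) = Sum.inr u := rfl
@[simp] lemma emap_r1 : emap' u v z w (Sum.inr 1) = Sum.inr v := rfl
@[simp] lemma emap_r2 : emap' u v z w (Sum.inr 2) = Sum.inr w := rfl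

lemma emap_inj (huv : u ≠ v) (huz : u ≠ z) (huw : u ≠ w) (hvz : v ≠ z) (hvw : v ≠ w)
    (hzw : z ≠ w) : Function.Injective (emap' u v z w) := by
  rintro (i | i) (j | j) h <;> fin_cases i <;> fin_cases j <;>
    simp_all [emap', huv.symm, huz.symm, huw.symm, hvz.symm, hvw.symm, hzw.symm]
end emap

lemma key {V ι : Type*} (A : V → V → Prop) (part : V → ι)
    (hrefl : ∀ x, A x x)
    (hsame : ∀ x y, x ≠ y → part x = part y → ¬ A x y)
    (hdiff : ∀ x y, part x ≠ part y → (A x y ↔ ¬ A y x))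
    (u v : V) (huv : u ≠ v) (hpuv : part u = part v)
    (hdom : ∀ y, part y ≠ part u → A y u ∧ A y v)
    (w z : V) (hw : part w ≠ part u) (hz : part z ≠ part u)
    (hwz : part w ≠ part z) (hA : A w z) :
    ∃ w z : V, part w ≠ part u ∧ part z ≠ part u ∧ w ≠ z ∧ A w z ∧
      Nonempty
        (((bipartiteRep A).induce
            ({Sum.inl w, Sum.inr w, Sum.inl u, Sum.inr u, Sum.inl v, Sum.inr v,
              Sum.inl z} : Set (V ⊕ V))) ≃g bipartiteNet) := by
  classical
  have hwv : part w ≠ part v := hpuv ▸ hw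
  have hzv : part z ≠ part v := hpuv ▸ hz
  have hwu' : w ≠ u := fun h => hw (by rw [h])
  have hwv' : w ≠ v := fun h => hwv (by rw [h])
  have hzu' : z ≠ u := fun h => hz (by rw [h])
  have hzv' : z ≠ v := fun h => hzv (by rw [h])
  have hwz' : w ≠ z := fun h => hwz (by rw [h])
  obtain ⟨Awu, Awv⟩ := hdom w hw
  obtain ⟨Azu, Azv⟩ := hdom z hz
  have nAuw : ¬ A u w := (hdiff w u hw).mp Awu
  have nAvw : ¬ A v w := (hdiff w v hwv).mp Awv
  have nAuz : ¬ A u z := (hdiff z u hz).mp Azu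
  have nAvz : ¬ A v z := (hdiff z v hzv).mp Azv
  have nAzw : ¬ A z w := (hdiff w z hwz).mp hA
  have nAuv : ¬ A u v := hsame u v huv hpuv
  have nAvu : ¬ A v u := hsame v u huv.symm hpuv.symm
  refine ⟨w, z, hw, hz, hwz', hA, ?_⟩
  set s : Set (V ⊕ V) :=
    {Sum.inl w, Sum.inr w, Sum.inl u, Sum.inr u, Sum.inl v, Sum.inr v, Sum.inl z} with hs
  have hmem : ∀ a, emap' u v z w a ∈ s := by
    rintro (i | i) <;> fin_cases i <;> simp [s]
  let f : Fin 4 ⊕ Fin 3 → ↥s := fun a => ⟨emap' u v z w a, hmem a⟩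
  have hinj : Function.Injective (emap' u v z w) :=
    emap_inj u v z w huv hzu'.symm hwu'.symm hzv'.symm hwv'.symm hwz'.symm
  have hbij : Function.Bijective f := by
    constructor
    · intro a b h
      exact hinj (congrArg Subtype.val h)
    · rintro ⟨x, hx⟩
      rcases hx with h | h | h | h | h | h | h
      · exact ⟨Sum.inl 3, Subtype.ext (by simp [f, show x = Sum.inl w from h])⟩
      · exact ⟨Sum.inr 2, Subtype.ext (by simp [f, show x = Sum.inr w from h])⟩
      · exact ⟨Sum.inl 0, Subtype.ext (by simp [f, show x = Sum.inl u from h])⟩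
      · exact ⟨Sum.inr 0, Subtype.ext (by simp [f, show x = Sum.inr u from h])⟩
      · exact ⟨Sum.inl 1, Subtype.ext (by simp [f, show x = Sum.inl v from h])⟩
      · exact ⟨Sum.inr 1, Subtype.ext (by simp [f, show x = Sum.inr v from h])⟩
      · exact ⟨Sum.inl 2, Subtype.ext (by simp [f, show x = Sum.inl z from h])⟩
  have hiff2 : ∀ (i : Fin 4) (j : Fin 3),
      (bipartiteRep A).Adj (emap' u v z w (Sum.inl i)) (emap' u v z w (Sum.inr j)) ↔
        bipartiteNet.Adj (Sum.inl i) (Sum.inr j) := by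
    intro i j
    fin_cases i <;> fin_cases j <;>
      simp [rep_adj, net_adj_iff, hrefl, Awu, Awv, Azu, Azv, nAuw, nAvw, nAuz, nAvz,
        nAzw, nAuv, nAvu]
  have hiff : ∀ a b : Fin 4 ⊕ Fin 3,
      (bipartiteRep A).Adj (emap' u v z w a) (emap' u v z w b) ↔ bipartiteNet.Adj a b := by
    rintro (i | i) (j | j)
    · constructor
      · intro h; exact absurd h (by fin_cases i <;> fin_cases j <;> simp [rep_nadj_ll])
      · intro h; exact absurd h (net_nadj_ll i j)
    · exact hiff2 i j
    · rw [SimpleGraph.adj_comm, SimpleGraph.adj_comm bipartiteNet]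
      exact hiff2 j i
    · constructor
      · intro h; exact absurd h (by fin_cases i <;> fin_cases j <;> simp [rep_nadj_rr])
      · intro h; exact absurd h (net_nadj_rr i j)
  exact ⟨SimpleGraph.Iso.symm ⟨Equiv.ofBijective f hbij, fun {a b} => hiff a b⟩⟩

/-- Let `H` be a reflexive `k`-partite tournament (`k ≥ 3`): partite
sets are the fibres of a surjective `part : V → ι` with `|ι| = k`; there is a loop at
every vertex; distinct vertices in the same partite set are nonadjacent; between
vertices of different partite sets there is exactly one arc.  Suppose every partite
set is a singleton except `Sᵢ = {u, v}` (the fibre of `part u`), `H` is acyclic, and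
`Sᵢ` is dominated by all the other partite sets.  Then there exist vertices `w, z`
outside `Sᵢ` with `w → z` such that the seven vertices `w₁, w₂, u₁, u₂, v₁, v₂, z₁`
of `BG(H)` induce a bipartite net. -/
theorem stmt15 {V ι : Type*} [Fintype ι] (k : ℕ) (hk : 3 ≤ k)
    (hcard : Fintype.card ι = k)
    (A : V → V → Prop) (part : V → ι) (hsurj : Function.Surjective part)
    (hrefl : ∀ x, A x x)
    (hsame : ∀ x y, x ≠ y → part x = part y → ¬ A x y)
    (hdiff : ∀ x y, part x ≠ part y → (A x y ↔ ¬ A y x))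
    (u v : V) (huv : u ≠ v) (hpuv : part u = part v)
    (hSi : ∀ y, part y = part u → y = u ∨ y = v)
    (hsingle : ∀ y z, part y = part z → part y ≠ part u → y = z)
    (hacyc : ∀ (l : List V) (hl : l ≠ []), 2 ≤ l.length → l.Nodup →
      l.Chain' A → ¬ A (l.getLast hl) (l.head hl))
    (hdom : ∀ y, part y ≠ part u → A y u ∧ A y v) :
    ∃ w z : V, part w ≠ part u ∧ part z ≠ part u ∧ w ≠ z ∧ A w z ∧
      Nonempty
        (((bipartiteRep A).induce
            ({Sum.inl w, Sum.inr w, Sum.inl u, Sum.inr u, Sum.inl v, Sum.inr v,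
              Sum.inl z} : Set (V ⊕ V))) ≃g bipartiteNet) := by
  classical
  have h2 : 1 < (Finset.univ.erase (part u)).card := by
    have h := Finset.card_erase_of_mem (Finset.mem_univ (part u))
    have : Finset.univ.card = Fintype.card ι := rfl
    omega
  obtain ⟨i, hi, j, hj, hij⟩ := Finset.one_lt_card.mp h2
  obtain ⟨w0, hw0⟩ := hsurj i
  obtain ⟨z0, hz0⟩ := hsurj j
  have hw : part w0 ≠ part u := by rw [hw0]; exact Finset.ne_of_mem_erase hi
  have hz : part z0 ≠ part u := by rw [hz0]; exact Finset.ne_of_mem_erase hj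
  have hwz : part w0 ≠ part z0 := by rw [hw0, hz0]; exact hij
  by_cases hA : A w0 z0
  · exact key A part hrefl hsame hdiff u v huv hpuv hdom w0 z0 hw hz hwz hA
  · have hA' : A z0 w0 := by
      by_contra h
      exact h ((hdiff z0 w0 hwz.symm).mpr hA)
    exact key A part hrefl hsame hdiff u v huv hpuv hdom z0 w0 hz hw hwz.symm hA'
end

section
/- Let G be a bipartite graph that contains an induced cycle of length at least six. Then G is not a proper interval bigraph. Concretely: there is no pair of inclusion-free families of intervals (I_u)_{u∈S}, (I_v)_{v∈T} on the real line, indexed by the two partite sets S and T of G, such that u∈S and v∈T are adjacent in G if and only if I_u and I_v intersect. -/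
/-!
Walk around the cycle `v₀ v₁ …` and write `[Lₖ, Rₖ]` for the interval of `vₖ`. Consecutive
intervals meet, while `vₖ` and `vₖ₊₃` lie on opposite sides and are not adjacent, so their
intervals are disjoint. If `[Lₖ, Rₖ]` lies left of `[Lₖ₊₃, Rₖ₊₃]`, then `[Lₖ₊₁, Rₖ₊₁]` lies
left of `[Lₖ₊₄, Rₖ₊₄]`, since otherwise `Lₖ₊₁ ≤ Rₖ < Lₖ₊₃ ≤ Rₖ₊₄ < Lₖ₊₁`. So, after reversing
the line if necessary, every interval lies left of the one three steps ahead, and then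
`Rₖ < Lₖ₊₃ ≤ Rₖ₊₂`: the right endpoints increase strictly in steps of two, which is impossible
around a closed cycle.
-/

/-- The cycle of length `n` on `Fin n`: `i` adjacent to `i ± 1 (mod n)`. -/
def cycleGraph (n : ℕ) : SimpleGraph (Fin n) :=
  SimpleGraph.fromRel (fun i j => (i.val + 1) % n = j.val)

open Set Function Fin.NatCast

theorem Set.Icc_inter_Icc_nonempty_iff {α : Type*} [LinearOrder α] {a b c d : α} (hab : a ≤ b)
    (hcd : c ≤ d) : (Icc a b ∩ Icc c d).Nonempty ↔ a ≤ d ∧ c ≤ b := by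
  rw [Icc_inter_Icc, nonempty_Icc, sup_le_iff, le_inf_iff, le_inf_iff]
  exact ⟨fun h => ⟨h.1.2, h.2.1⟩, fun h => ⟨⟨hab, h.1⟩, h.2, hcd⟩⟩

section IntervalSequence

variable {α : Type*} [LinearOrder α] {L R : ℕ → α}

theorem forall_lt_shift_three_of_sep (hmeet : ∀ i, L (i + 1) ≤ R i ∧ L i ≤ R (i + 1))
    (hsep : ∀ i, R i < L (i + 3) ∨ R (i + 3) < L i) (h₀ : R 0 < L 3) :
    ∀ i, R i < L (i + 3) := by
  intro i
  induction i with
  | zero => exact h₀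
  | succ i ih =>
    refine (hsep (i + 1)).resolve_right fun h => lt_irrefl (L (i + 1)) ?_
    calc L (i + 1) ≤ R i := (hmeet i).1
      _ < L (i + 3) := ih
      _ ≤ R (i + 4) := (hmeet (i + 3)).2
      _ < L (i + 1) := h

theorem not_forall_lt_shift_three_of_periodic {n : ℕ} (hn : 0 < n) (hR : Periodic R n)
    (hmeet : ∀ i, L (i + 1) ≤ R i) : ¬ ∀ i, R i < L (i + 3) := by
  intro h
  have hmono : StrictMono fun k => R (2 * k) :=
    strictMono_nat_of_lt_succ fun k => (h (2 * k)).trans_le (hmeet (2 * k + 2))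
  have hper : R (2 * n) = R 0 := by simpa using hR.nat_mul_eq 2
  simpa [hper] using hmono hn

theorem false_of_periodic_of_meet_of_sep {n : ℕ} (hn : 0 < n) (hL : Periodic L n)
    (hR : Periodic R n) (hmeet : ∀ i, L (i + 1) ≤ R i ∧ L i ≤ R (i + 1))
    (hsep : ∀ i, R i < L (i + 3) ∨ R (i + 3) < L i) : False := by
  by_cases h₀ : R 0 < L 3
  · exact not_forall_lt_shift_three_of_periodic hn hR (fun i => (hmeet i).1)
      (forall_lt_shift_three_of_sep hmeet hsep h₀)
  · -- reverse the order: the intervals `[L i, R i]` become `[R i, L i]` in `αᵒᵈ`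
    let L' : ℕ → αᵒᵈ := fun i => OrderDual.toDual (R i)
    let R' : ℕ → αᵒᵈ := fun i => OrderDual.toDual (L i)
    have hmeet' : ∀ i, L' (i + 1) ≤ R' i ∧ L' i ≤ R' (i + 1) := fun i => (hmeet i).symm
    exact not_forall_lt_shift_three_of_periodic (L := L') hn (fun i => hL i)
      (fun i => (hmeet' i).1) (forall_lt_shift_three_of_sep (L := L') (R := R') hmeet'
        (fun i => (hsep i).symm) ((hsep 0).resolve_left h₀))

end IntervalSequence

theorem cycleGraph_adj_natCast_iff {n : ℕ} [NeZero n] {a b : ℕ} :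
    (cycleGraph n).Adj a b ↔ ¬ a ≡ b [MOD n] ∧ (a + 1 ≡ b [MOD n] ∨ b + 1 ≡ a [MOD n]) := by
  simp only [cycleGraph, SimpleGraph.fromRel_adj, ne_eq, Fin.ext_iff, Fin.val_natCast,
    Nat.ModEq, Nat.mod_add_mod]

theorem Nat.le_of_modEq_add {n k d : ℕ} (hd : 0 < d) (h : k ≡ k + d [MOD n]) : n ≤ d :=
  Nat.le_of_dvd hd <| by simpa using (Nat.modEq_iff_dvd' (Nat.le_add_right k d)).1 h

theorem cycleGraph_adj_natCast_succ {n : ℕ} [NeZero n] (hn : 2 ≤ n) (k : ℕ) :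
    (cycleGraph n).Adj k ((k + 1 : ℕ) : Fin n) :=
  cycleGraph_adj_natCast_iff.2
    ⟨fun h => by have := Nat.le_of_modEq_add one_pos h; omega, .inl rfl⟩

theorem cycleGraph_not_adj_natCast_add_three {n : ℕ} [NeZero n] (hn : 5 ≤ n) (k : ℕ) :
    ¬ (cycleGraph n).Adj k ((k + 3 : ℕ) : Fin n) := by
  rintro h
  rcases (cycleGraph_adj_natCast_iff.1 h).2 with h | h
  · have := Nat.le_of_modEq_add (k := k + 1) (d := 2) two_pos h
    omega
  · have := Nat.le_of_modEq_add (k := k) (d := 4) four_pos h.symm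
    omega

section IntervalBigraph

variable {S T : Type*} {G : SimpleGraph (S ⊕ T)}

theorem isLeft_ne_of_adj
    (hbip : ∀ a b, G.Adj a b → (a.isLeft ∧ b.isRight) ∨ (a.isRight ∧ b.isLeft))
    {a b : S ⊕ T} (h : G.Adj a b) : a.isLeft ≠ b.isLeft := by
  rcases a with a | a <;> rcases b with b | b <;> simp_all

theorem isLeft_ne_add_three_of_adj_succ
    (hbip : ∀ a b, G.Adj a b → (a.isLeft ∧ b.isRight) ∨ (a.isRight ∧ b.isLeft))
    {v : ℕ → S ⊕ T} (hv : ∀ k, G.Adj (v k) (v (k + 1))) (k : ℕ) :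
    (v k).isLeft ≠ (v (k + 3)).isLeft := by
  have hstep := fun k => isLeft_ne_of_adj hbip (hv k)
  have hodd : ∀ a b c d : Bool, a ≠ b → b ≠ c → c ≠ d → a ≠ d := by decide
  exact hodd _ _ _ _ (hstep k) (hstep (k + 1)) (hstep (k + 2))

theorem adj_iff_Icc_inter_Icc_nonempty {α : Type*} [Preorder α] {l r : S ⊕ T → α}
    (hadj : ∀ (s : S) (t : T), G.Adj (Sum.inl s) (Sum.inr t) ↔
      (Icc (l (Sum.inl s)) (r (Sum.inl s)) ∩ Icc (l (Sum.inr t)) (r (Sum.inr t))).Nonempty)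
    {a b : S ⊕ T} (hab : a.isLeft ≠ b.isLeft) :
    G.Adj a b ↔ (Icc (l a) (r a) ∩ Icc (l b) (r b)).Nonempty := by
  rcases a with a | a <;> rcases b with b | b <;>
    simp only [Sum.isLeft_inl, Sum.isLeft_inr, ne_eq, not_true_eq_false] at hab
  · exact hadj a b
  · rw [G.adj_comm, inter_comm]
    exact hadj b a

end IntervalBigraph

/-- Let `G` be a bipartite graph on `S ⊕ T` (every edge joining `S` to
`T`) that contains an induced cycle of length at least six.  Then `G` is not a proper
interval bigraph: there is no assignment of intervals `[l v, r v]` on the real line to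
the vertices such that `u ∈ S` and `v ∈ T` are adjacent iff their intervals intersect,
and within each partite set the family of intervals is inclusion-free (no interval of
a partite set properly contains another interval from the same partite set). -/
theorem stmt18 {S T : Type*} (G : SimpleGraph (S ⊕ T))
    (hbip : ∀ a b, G.Adj a b → (a.isLeft ∧ b.isRight) ∨ (a.isRight ∧ b.isLeft))
    (hcycle : ∃ (n : ℕ) (_ : 6 ≤ n) (φ : Fin n ↪ S ⊕ T),
      ∀ i j, G.Adj (φ i) (φ j) ↔ (cycleGraph n).Adj i j) :
    ¬ ∃ l r : S ⊕ T → ℝ,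
      (∀ v, l v ≤ r v) ∧
      (∀ (s : S) (t : T), G.Adj (Sum.inl s) (Sum.inr t) ↔
        (Set.Icc (l (Sum.inl s)) (r (Sum.inl s)) ∩
          Set.Icc (l (Sum.inr t)) (r (Sum.inr t))).Nonempty) ∧
      (∀ s s' : S, ¬ Set.Icc (l (Sum.inl s)) (r (Sum.inl s)) ⊂
          Set.Icc (l (Sum.inl s')) (r (Sum.inl s'))) ∧
      (∀ t t' : T, ¬ Set.Icc (l (Sum.inr t)) (r (Sum.inr t)) ⊂
          Set.Icc (l (Sum.inr t')) (r (Sum.inr t'))) := by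
  rintro ⟨l, r, hlr, hadj, -, -⟩
  obtain ⟨n, hn, φ, hφ⟩ := hcycle
  have : NeZero n := ⟨by omega⟩
  set v : ℕ → S ⊕ T := fun k => φ k
  have hv : Periodic v n := fun k => by simp [v]
  have hedge : ∀ k, G.Adj (v k) (v (k + 1)) := fun k =>
    (hφ _ _).2 (cycleGraph_adj_natCast_succ (by omega) k)
  have hnonedge : ∀ k, ¬ G.Adj (v k) (v (k + 3)) := fun k =>
    (hφ _ _).not.2 (cycleGraph_not_adj_natCast_add_three (by omega) k)
  refine false_of_periodic_of_meet_of_sep (L := l ∘ v) (R := r ∘ v) (by omega) (hv.comp l)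
    (hv.comp r) (fun k => ?_) (fun k => ?_)
  · have hmeet := (adj_iff_Icc_inter_Icc_nonempty hadj
      (isLeft_ne_of_adj hbip (hedge k))).1 (hedge k)
    rw [Icc_inter_Icc_nonempty_iff (hlr _) (hlr _)] at hmeet
    exact hmeet.symm
  · have hsep := mt (adj_iff_Icc_inter_Icc_nonempty hadj
      (isLeft_ne_add_three_of_adj_succ hbip hedge k)).2 (hnonedge k)
    rw [Icc_inter_Icc_nonempty_iff (hlr _) (hlr _), not_and_or, not_le, not_le] at hsep
    exact hsep.symm
end

section
/- The bipartite claw (the tree on 7 vertices with a center x4 adjacent to y1, y2, y3, and leaves x1, x2, x3 adjacent to y1, y2, y3 respectively) is not a proper interval bigraph: there is no inclusion-free interval representation of its two partite sets {x1,x2,x3,x4} and {y1,y2,y3} such that xi and yj are adjacent iff their intervals intersect. -/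
/-- The bipartite claw: the tree on `x₁,x₂,x₃,x₄` (as `Sum.inl 0,…,Sum.inl 3`) and
`y₁,y₂,y₃` (as `Sum.inr 0,…,Sum.inr 2`) with edges
`x₄y₁, y₁x₁, x₄y₂, y₂x₂, x₄y₃, y₃x₃`. -/
def bipartiteClaw : SimpleGraph (Fin 4 ⊕ Fin 3) :=
  SimpleGraph.fromRel (fun a b =>
    ∃ i j, a = Sum.inl i ∧ b = Sum.inr j ∧ (i.val = 3 ∨ i.val = j.val))

/-- Key geometric lemma: the leaf interval attached to the middle `Y` interval is
strictly contained in the center interval. -/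
lemma claw_key {la ra lm rm lb rb lx rx l4 r4 : ℝ}
    (h1 : lx ≤ rx) (h2 : l4 ≤ r4)
    (hm1 : lx ≤ rm) (hm2 : lm ≤ rx)
    (ha : ¬(lx ≤ ra ∧ la ≤ rx))
    (hb : ¬(lx ≤ rb ∧ lb ≤ rx))
    (h4a : l4 ≤ ra) (h4b : lb ≤ r4)
    (ham : la ≤ lm) (hmb : rm ≤ rb) :
    Set.Icc lx rx ⊂ Set.Icc l4 r4 := by
  push_neg at ha hb
  have hra : ra < lx := by
    by_contra h
    push_neg at h
    have := ha h
    linarith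
  have hrb : rx < lb := by
    rcases le_or_gt lx rb with h | h
    · exact hb h
    · linarith
  rw [Set.ssubset_def]
  refine ⟨Set.Icc_subset_Icc (by linarith) (by linarith), fun hsub => ?_⟩
  have hmem : l4 ∈ Set.Icc l4 r4 := ⟨le_refl _, h2⟩
  have := hsub hmem
  have : lx ≤ l4 := this.1
  linarith

/-- The bipartite claw is not a proper interval bigraph: there is no
assignment of intervals `[l v, r v]` on the real line to its vertices such that `xᵢ`
and `yⱼ` are adjacent iff their intervals intersect, with each of the two families of
intervals (one for the partite set `{x₁,x₂,x₃,x₄}`, one for `{y₁,y₂,y₃}`)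
inclusion-free. -/
theorem stmt19 :
    ¬ ∃ l r : Fin 4 ⊕ Fin 3 → ℝ,
      (∀ v, l v ≤ r v) ∧
      (∀ (i : Fin 4) (j : Fin 3), bipartiteClaw.Adj (Sum.inl i) (Sum.inr j) ↔
        (Set.Icc (l (Sum.inl i)) (r (Sum.inl i)) ∩
          Set.Icc (l (Sum.inr j)) (r (Sum.inr j))).Nonempty) ∧
      (∀ i i' : Fin 4, ¬ Set.Icc (l (Sum.inl i)) (r (Sum.inl i)) ⊂
          Set.Icc (l (Sum.inl i')) (r (Sum.inl i'))) ∧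
      (∀ j j' : Fin 3, ¬ Set.Icc (l (Sum.inr j)) (r (Sum.inr j)) ⊂
          Set.Icc (l (Sum.inr j')) (r (Sum.inr j'))) := by
  rintro ⟨l, r, hlr, hadj, hX, hY⟩
  set lX : Fin 4 → ℝ := fun i => l (Sum.inl i) with hlX
  set rX : Fin 4 → ℝ := fun i => r (Sum.inl i) with hrX
  set L : Fin 3 → ℝ := fun j => l (Sum.inr j) with hL
  set R : Fin 3 → ℝ := fun j => r (Sum.inr j) with hR
  -- adjacency unfolding
  have hm : ∀ (i : Fin 4) (j : Fin 3),
      bipartiteClaw.Adj (Sum.inl i) (Sum.inr j) ↔ (i.val = 3 ∨ i.val = j.val) := by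
    intro i j
    simp [bipartiteClaw]
  have hne : ∀ (i : Fin 4) (j : Fin 3),
      (i.val = 3 ∨ i.val = j.val) ↔ (lX i ≤ R j ∧ L j ≤ rX i) := by
    intro i j
    rw [← hm, hadj, Set.Icc_inter_Icc, Set.nonempty_Icc, max_le_iff, le_min_iff, le_min_iff]
    constructor
    · rintro ⟨⟨_, h1⟩, ⟨h2, _⟩⟩
      exact ⟨h1, h2⟩
    · rintro ⟨h1, h2⟩
      exact ⟨⟨hlr _, h1⟩, ⟨h2, hlr _⟩⟩
  -- no Y interval contained in another
  have hsub : ∀ j j' : Fin 3, j ≠ j' → ¬(L j' ≤ L j ∧ R j ≤ R j') := by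
    rintro j j' hjj ⟨h1, h2⟩
    have hsubset : Set.Icc (L j) (R j) ⊆ Set.Icc (L j') (R j') := Set.Icc_subset_Icc h1 h2
    have hback : Set.Icc (L j') (R j') ⊆ Set.Icc (L j) (R j) := by
      by_contra h
      exact hY j j' (Set.ssubset_def ▸ ⟨hsubset, h⟩)
    have e1 : L j ≤ L j' := (hback ⟨le_refl _, hlr _⟩).1
    have e2 : R j' ≤ R j := (hback ⟨hlr _, le_refl _⟩).2
    set i : Fin 4 := ⟨j.val, by omega⟩ with hi
    have hmeets : lX i ≤ R j ∧ L j ≤ rX i := (hne i j).mp (Or.inr rfl)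
    have hbad : (i.val = 3 ∨ i.val = j'.val) :=
      (hne i j').mpr ⟨by linarith, by linarith⟩
    have : j.val ≠ j'.val := fun h => hjj (Fin.ext h)
    simp only [hi] at hbad
    omega
  -- strict order on Y intervals
  have str : ∀ j j' : Fin 3, j ≠ j' →
      (L j < L j' ∧ R j < R j') ∨ (L j' < L j ∧ R j' < R j) := by
    intro j j' h
    have A := hsub j j' h
    have B := hsub j' j h.symm
    push_neg at A B
    rcases le_or_gt (L j) (L j') with hc | hc
    · have hr := B hc
      left
      refine ⟨?_, hr⟩
      by_contra hh
      push_neg at hh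
      have := A hh
      linarith
    · exact Or.inr ⟨hc, A (le_of_lt hc)⟩
  -- the main middle-interval argument
  have main : ∀ a m b : Fin 3, m.val ≠ a.val → m.val ≠ b.val →
      L a ≤ L m → R m ≤ R b → False := by
    intro a m b hma hmb h1 h2
    set i : Fin 4 := ⟨m.val, by omega⟩ with hi
    have hmeets : lX i ≤ R m ∧ L m ≤ rX i := (hne i m).mp (Or.inr rfl)
    have hmissa : ¬(lX i ≤ R a ∧ L a ≤ rX i) := by
      intro h
      have := (hne i a).mpr h
      simp only [hi] at this
      omega
    have hmissb : ¬(lX i ≤ R b ∧ L b ≤ rX i) := by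
      intro h
      have := (hne i b).mpr h
      simp only [hi] at this
      omega
    have h4a : lX 3 ≤ R a ∧ L a ≤ rX 3 := (hne 3 a).mp (Or.inl rfl)
    have h4b : lX 3 ≤ R b ∧ L b ≤ rX 3 := (hne 3 b).mp (Or.inl rfl)
    exact hX i 3 (claw_key (hlr _) (hlr _) hmeets.1 hmeets.2 hmissa hmissb
      h4a.1 h4b.2 h1 h2)
  have h01 := str 0 1 (by decide)
  have h02 := str 0 2 (by decide)
  have h12 := str 1 2 (by decide)
  rcases h01 with h01 | h01 <;> rcases h02 with h02 | h02 <;> rcases h12 with h12 | h12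
  · exact main 0 1 2 (by decide) (by decide) (le_of_lt h01.1) (le_of_lt h12.2)
  · exact main 0 2 1 (by decide) (by decide) (le_of_lt h02.1) (le_of_lt h12.2)
  · linarith [h01.1, h02.1, h12.1]
  · exact main 2 0 1 (by decide) (by decide) (le_of_lt h02.1) (le_of_lt h01.2)
  · exact main 1 0 2 (by decide) (by decide) (le_of_lt h01.1) (le_of_lt h02.2)
  · linarith [h01.1, h02.1, h12.1]
  · exact main 1 2 0 (by decide) (by decide) (le_of_lt h12.1) (le_of_lt h02.2)
  · exact main 2 1 0 (by decide) (by decide) (le_of_lt h12.1) (le_of_lt h01.2)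
end
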